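/- Consider exponential last-passage percolation with the flat substrate whose concave corners are the anti-diagonal {(z,−z) : z ∈ ℤ}. For n ≥ 1 let Z(n) ∈ ℤ be defined by Φ(n,n) = (Z(n), −Z(n)), the location of the root of the point (n,n). Then for all integers m, n ≥ 1, P(|Z(n)| < m) ≤ 2m · P(H₀ ≥ n). -/

import Mathlib

open MeasureTheory ProbabilityTheory Filter Set

noncomputable section

namespace GF

/-- A lattice point of `ℤ²`. -/
abbrev Pt := ℤ × ℤ

/-- The unit vector `e₁ = (1,0)`. -/
def e1 : Pt := (1, 0)
/-- The unit vector `e₂ = (0,1)`. -/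
def e2 : Pt := (0, 1)
/-- The diagonal vector `d = (1,1)`. -/
def dd : Pt := (1, 1)

/-- Strict coordinatewise inequality on `ℤ²`. -/
def ltc (u v : Pt) : Prop := u.1 < v.1 ∧ u.2 < v.2

/-- An up-right (unit steps `e₁`, `e₂`) lattice path from `x` to `y`. -/
structure URPath (x y : Pt) where
  len : ℕ
  pts : ℕ → Pt
  first : pts 0 = x
  last : pts len = y
  step : ∀ i < len, pts (i + 1) = pts i + e1 ∨ pts (i + 1) = pts i + e2

/-- The weight of an up-right path: the sum of the weights of its vertices. -/
def URPath.weight (W : Pt → ℝ) {x y : Pt} (γ : URPath x y) : ℝ :=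
  ∑ i ∈ Finset.range (γ.len + 1), W (γ.pts i)

/-- The last-passage time between `x` and `y`. -/
def lpt (W : Pt → ℝ) (x y : Pt) : ℝ :=
  sSup {t | ∃ γ : URPath x y, γ.weight W = t}

/-- The family `W` is i.i.d. exponential of rate `r` under `P`. -/
def IIDExp {Ω : Type*} {ι : Type*} [MeasurableSpace Ω] (P : Measure Ω)
    (W : ι → Ω → ℝ) (r : ℝ) : Prop :=
  iIndepFun W P ∧ ∀ i, Measure.map (W i) P = expMeasure r

/-- A substrate: a bi-infinite down-right path through the origin. -/
def IsSubstrate (φ : ℤ → Pt) : Prop :=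
  φ 0 = (0, 0) ∧ ∀ z : ℤ, φ (z + 1) = φ z + e1 ∨ φ (z + 1) = φ z - e2

/-- The substrate `φ` has a macroscopic concave wedge, with asymptotic slopes `-lm` at `-∞`
and `-lp` at `+∞`. -/
def HasConcaveWedge (φ : ℤ → Pt) (lm lp : ℝ) : Prop :=
  Tendsto (fun z : ℤ => ((φ z).2 : ℝ) / ((φ z).1 : ℝ)) atBot (nhds (-lm)) ∧
    Tendsto (fun z : ℤ => ((φ z).2 : ℝ) / ((φ z).1 : ℝ)) atTop (nhds (-lp))

/-- `z` is (the index of) a microscopic concave corner of the substrate `φ`: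
`φ_z - φ_{z-1} = -e₂` and `φ_{z+1} - φ_z = e₁`. -/
def IsCornerIdx (φ : ℤ → Pt) (z : ℤ) : Prop :=
  φ z = φ (z - 1) - e2 ∧ φ (z + 1) = φ z + e1

/-- The growth region of the substrate `φ`. -/
def growth (φ : ℤ → Pt) : Set Pt := {x | ∃ z, ltc (φ z) x}

/-- The corner `φ z` is a root of the point `x`: among all concave corners `z'` with
`φ z' < x` it maximises the last-passage time `L(φ z' + d, x)`. -/
def IsRoot (W : Pt → ℝ) (φ : ℤ → Pt) (z : ℤ) (x : Pt) : Prop :=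
  IsCornerIdx φ z ∧ ltc (φ z) x ∧
    ∀ z', IsCornerIdx φ z' → ltc (φ z') x → lpt W (φ z' + dd) x ≤ lpt W (φ z + dd) x

/-- The corner `φ z` is the asymptotic root in the direction `(1, a)`: for every sequence of
points of the growth region going to infinity with asymptotic slope `a`, it is eventually
its root. -/
def IsAsymRoot (W : Pt → ℝ) (φ : ℤ → Pt) (a : ℝ) (z : ℤ) : Prop :=
  IsCornerIdx φ z ∧
    ∀ x : ℕ → Pt, (∀ n, x n ∈ growth φ) →
      Tendsto (fun n => (x n).1) atTop atTop →
      Tendsto (fun n => (x n).2) atTop atTop →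
      Tendsto (fun n => ((x n).2 : ℝ) / ((x n).1 : ℝ)) atTop (nhds a) →
      ∀ᶠ n in atTop, IsRoot W φ z (x n)

/-- `ρ_a = √a / (1 + √a)`. -/
def rho (a : ℝ) : ℝ := Real.sqrt a / (1 + Real.sqrt a)

/-- The increments `X_z^{a,φ}` of the substrate random walk, built from the two independent
exponential families `E` (rate `ρ_a`, used on down/up steps) and `E'` (rate `1 - ρ_a`, used
with a minus sign on right/left steps). -/
def inc (φ : ℤ → Pt) (E E' : ℤ → ℝ) (z : ℤ) : ℝ :=
  if 1 ≤ z then (if φ z = φ (z - 1) + e1 then -E' z else E z)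
  else (if φ (z - 1) = φ z - e1 then E' z else -E z)

/-- The two-sided walk with increments `X`: `S 0 = 0`, `S z = ∑_{k=1}^z X k` for `z > 0` and
`S z = ∑_{k=z}^{-1} X (k+1)` for `z < 0`. -/
def walk (X : ℤ → ℝ) (z : ℤ) : ℝ :=
  if 0 ≤ z then ∑ k ∈ Finset.range z.toNat, X ((k : ℤ) + 1)
  else ∑ k ∈ Finset.range (-z).toNat, X (-(k : ℤ))

/-- The law of the difference `E - F` of two independent exponential random variables of
rates `r1` and `r2`. -/
def diffExp (r1 r2 : ℝ) : Measure ℝ :=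
  Measure.map (fun p : ℝ × ℝ => p.1 - p.2) ((expMeasure r1).prod (expMeasure r2))

/-- The Bernoulli substrate built from the step indicators `U`: `φ₋₁ = e₂`, `φ₀ = 0`,
`φ₁ = e₁`; for `z ≥ 1` the step `φ_{z+1} - φ_z` is `-e₂` when the corresponding indicator is
`true` (else `e₁`), and for `z ≤ -1` the step `φ_{z-1} - φ_z` is `e₂` when the corresponding
indicator is `true` (else `-e₁`). -/
def bsub (U : ℤ → Bool) : ℤ → Pt := fun z =>
  if 1 ≤ z then
    (1, 0) + ∑ k ∈ Finset.range (z - 1).toNat, (if U ((k : ℤ) + 2) then -(0, 1) else ((1, 0) : Pt))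
  else if z = 0 then 0
  else (0, 1) + ∑ k ∈ Finset.range (-z - 1).toNat, (if U (-(k : ℤ) - 2) then (0, 1) else -((1, 0) : Pt))

/-- The step indicators of a Bernoulli substrate with parameters `p₊` (on the right) and
`p₋` (on the left): independent, `P (U z = true) = p₊` for `z ≥ 2` and `= p₋` for `z ≤ -2`. -/
def BernoulliSteps {Ω : Type*} [MeasurableSpace Ω] (P : Measure Ω)
    (U : ℤ → Ω → Bool) (pp pm : ℝ) : Prop :=
  iIndepFun U P ∧
    (∀ z : ℤ, 2 ≤ z → P {ω | U z ω = true} = ENNReal.ofReal pp) ∧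
    (∀ z : ℤ, z ≤ -2 → P {ω | U z ω = true} = ENNReal.ofReal pm)

/-- The substrate walk of the Bernoulli substrate model, as a function of the sample point. -/
def bWalk {Ω : Type*} (U : ℤ → Ω → Bool) (E E' : ℤ → Ω → ℝ) (ω : Ω) : ℤ → ℝ :=
  walk (inc (bsub fun z => U z ω) (fun z => E z ω) fun z => E' z ω)

/-- The periodic substrate with parameters `k₊`, `k₋`: for `z > 0` it repeatedly takes `k₊`
steps `e₁` followed by one step `-e₂`, and for `z < 0` it repeatedly takes `k₋` steps up
followed by one step left. Its concave corners are the indices `n (k₊ + 1)`, `n ≥ 0`, and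
`-n (k₋ + 1)`, `n ≥ 0`. -/
def psub (kp km : ℕ) : ℤ → Pt := fun z =>
  if 0 ≤ z then (z - z / (kp + 1), -(z / (kp + 1)))
  else (-((-z) / (km + 1)), (-z) - (-z) / (km + 1))

/-- The finite rooted substrate with parameter `m`: down the vertical line `x = -1` (so that
`φ_z = |z+1| e₂ - e₁` for `z ≤ -2`), `φ₋₁ = e₂`, then `φ_z = z e₁` for `0 ≤ z ≤ m`, one step
down, and then right along the line `y = -1`.  It has exactly three concave corners, at
`(-1,1)`, `(0,0)` and `(m,-1)`. -/
def frs (m : ℕ) : ℤ → Pt := fun z =>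
  if z ≤ -2 then (-1, -z - 1)
  else if z = -1 then (0, 1)
  else if z ≤ (m : ℤ) then (z, 0)
  else (z - 1, -1)

/-- The flat substrate, whose set of concave corners is the antidiagonal `{(z,-z) : z ∈ ℤ}`;
the corner `(z, -z)` has index `2 z`. -/
def flat : ℤ → Pt := fun w =>
  if 2 ∣ w then (w / 2, -(w / 2)) else ((w + 1) / 2, (-(w - 1)) / 2)

/-- For the flat substrate: the geodesic tree rooted at the corner `(z, -z)` has height at
least `n`, i.e. it contains a point of the line `x(1) + x(2) = n + 1`. -/
def HeightGe (W : Pt → ℝ) (z : ℤ) (n : ℕ) : Prop :=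
  ∃ x : Pt, x.1 + x.2 = (n : ℤ) + 1 ∧ IsRoot W flat (2 * z) x

/-- The cumulative profile of a weighted substrate: `ν(0) = 0`, `ν(k) = ∑_{i=1}^k ν_i` for
`k > 0` and `ν(k) = -∑_{i=k}^{-1} ν_i` for `k < 0`. -/
def cum (ν : ℤ → ℝ) (k : ℤ) : ℝ :=
  if 0 ≤ k then ∑ i ∈ Finset.range k.toNat, ν ((i : ℤ) + 1)
  else -∑ i ∈ Finset.range (-k).toNat, ν (k + (i : ℤ))

/-- In the weighted substrate model, `k` is a root of the point `(x, n)`: it maximises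
`j ↦ ν(j) + L((j,1),(x,n))` over `j ≤ x`. -/
def IsKRoot (W : Pt → ℝ) (ν : ℤ → ℝ) (k x n : ℤ) : Prop :=
  k ≤ x ∧ ∀ j ≤ x, cum ν j + lpt W (j, 1) (x, n) ≤ cum ν k + lpt W (k, 1) (x, n)

/-- In the weighted substrate model, `k` is the asymptotic root in the direction `(1, a)`. -/
def IsAsymKRoot (W : Pt → ℝ) (ν : ℤ → ℝ) (a : ℝ) (k : ℤ) : Prop :=
  ∀ x t : ℕ → ℤ, (∀ n, 1 ≤ t n) →
    Tendsto x atTop atTop → Tendsto t atTop atTop →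
    Tendsto (fun n => (t n : ℝ) / (x n : ℝ)) atTop (nhds a) →
    ∀ᶠ n in atTop, IsKRoot W ν k (x n) (t n)

end GF

/-!
If `(z, -z)` is the root of `(n, n)`, then it is also the root of every point of the geodesic from
`(z + 1, -z + 1)` to `(n, n)`: a better root for such a point would, by superadditivity of
last-passage times, be a better root for `(n, n)`. That geodesic crosses the line
`x(1) + x(2) = n + 1`, so `|Z(n)| < m` forces one of the `2m - 1` trees `T_z`, `|z| < m`, to have
height at least `n`. Translating the weights by `(z, -z)` carries `T_z` to `T_0` and preserves the
i.i.d. law, so each of these events has probability `P(H₀ ≥ n)`.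
-/

lemma ProbabilityTheory.iIndepFun.map_precomp_eq_map {Ω ι 𝓧 : Type*} [MeasurableSpace Ω]
    [MeasurableSpace 𝓧] [Countable ι] {P : Measure Ω} {X : ι → Ω → 𝓧} (hX : iIndepFun X P)
    (hmeas : ∀ i, AEMeasurable (X i) P) {μ : Measure 𝓧} (hlaw : ∀ i, P.map (X i) = μ)
    {g : ι → ι} (hg : g.Injective) :
    P.map (fun ω i => X (g i) ω) = P.map (fun ω i => X i ω) := by
  rw [(hX.precomp hg).map_fun_eq_infinitePi_map₀' fun i => hmeas (g i),
    hX.map_fun_eq_infinitePi_map₀' hmeas]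
  simp only [hlaw]

namespace GF

lemma ltc_iff_add_dd_le {u v : Pt} : ltc u v ↔ u + dd ≤ v := by
  simp only [ltc, dd, Prod.le_def, Prod.fst_add, Prod.snd_add]
  omega

namespace URPath

variable {x y z : Pt}

lemma level_pts (γ : URPath x y) {i : ℕ} (hi : i ≤ γ.len) :
    (γ.pts i).1 + (γ.pts i).2 = x.1 + x.2 + i := by
  induction i with
  | zero => simp [γ.first]
  | succ i ih =>
    rcases γ.step i hi with h | h <;>
      · rw [h]; simp only [e1, e2, Prod.fst_add, Prod.snd_add]; push_cast; linarith [ih (by omega)]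

lemma len_eq (γ : URPath x y) : (γ.len : ℤ) = y.1 + y.2 - (x.1 + x.2) := by
  have := γ.level_pts le_rfl
  rw [γ.last] at this
  omega

lemma pts_mono (γ : URPath x y) {i j : ℕ} (hij : i ≤ j) (hj : j ≤ γ.len) :
    γ.pts i ≤ γ.pts j := by
  induction j, hij using Nat.le_induction with
  | base => rfl
  | succ j _ ih =>
    refine (ih (by omega)).trans ?_
    rcases γ.step j (by omega) with h | h <;>
      · rw [h]; exact le_add_of_nonneg_right (by decide)

lemma le_pts (γ : URPath x y) {i : ℕ} (hi : i ≤ γ.len) : x ≤ γ.pts i := by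
  simpa only [γ.first] using γ.pts_mono (Nat.zero_le i) hi

lemma pts_le (γ : URPath x y) {i : ℕ} (hi : i ≤ γ.len) : γ.pts i ≤ y := by
  simpa only [γ.last] using γ.pts_mono hi le_rfl

def support (γ : URPath x y) : Finset Pt := (Finset.range (γ.len + 1)).image γ.pts

lemma weight_eq_sum_support (W : Pt → ℝ) (γ : URPath x y) :
    γ.weight W = ∑ p ∈ γ.support, W p := by
  rw [support, Finset.sum_image]
  · rfl
  intro i hi j hj hij
  simp only [Finset.coe_range, Set.mem_Iio] at hi hj
  have := γ.level_pts (i := i) (by omega)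
  have := γ.level_pts (i := j) (by omega)
  rw [hij] at *
  omega

lemma support_subset_Icc (γ : URPath x y) : γ.support ⊆ Finset.Icc x y := by
  intro p hp
  obtain ⟨i, hi, rfl⟩ := Finset.mem_image.mp hp
  have hi : i ≤ γ.len := by simpa [Nat.lt_succ_iff] using hi
  exact Finset.mem_Icc.mpr ⟨γ.le_pts hi, γ.pts_le hi⟩

def rightThenUp (h : x ≤ y) : URPath x y where
  len := (y.1 - x.1).toNat + (y.2 - x.2).toNat
  pts i := (x.1 + min i (y.1 - x.1).toNat, x.2 + (i - (y.1 - x.1).toNat : ℕ))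
  first := by simp
  last := by
    obtain ⟨h1, h2⟩ := Prod.le_def.mp h
    ext <;> simp <;> omega
  step i _ := by
    by_cases hi : i < (y.1 - x.1).toNat
    · left; ext <;> simp [e1] <;> omega
    · right; ext <;> simp [e2] <;> omega

def append (γ₁ : URPath x y) (γ₂ : URPath y z) : URPath x z where
  len := γ₁.len + γ₂.len
  pts i := if i ≤ γ₁.len then γ₁.pts i else γ₂.pts (i - γ₁.len)
  first := by simp [γ₁.first]
  last := by
    by_cases h : γ₂.len = 0
    · simp [h, γ₁.last, ← γ₂.first, ← γ₂.last]
    · simp [show ¬γ₁.len + γ₂.len ≤ γ₁.len by omega, γ₂.last]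
  step i hi := by
    by_cases h : i + 1 ≤ γ₁.len
    · simpa [h, show i ≤ γ₁.len by omega] using γ₁.step i h
    · have hpi :
          (if i ≤ γ₁.len then γ₁.pts i else γ₂.pts (i - γ₁.len)) = γ₂.pts (i - γ₁.len) := by
        split_ifs with h'
        · rw [show i = γ₁.len by omega, Nat.sub_self, γ₁.last, γ₂.first]
        · rfl
      simp only [h, if_false, hpi, show i + 1 - γ₁.len = i - γ₁.len + 1 by omega]
      exact γ₂.step _ (by omega)

lemma append_pts_of_le (γ₁ : URPath x y) (γ₂ : URPath y z) {i : ℕ} (hi : i ≤ γ₁.len) :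
    (γ₁.append γ₂).pts i = γ₁.pts i := if_pos hi

lemma append_pts_len_add (γ₁ : URPath x y) (γ₂ : URPath y z) (i : ℕ) :
    (γ₁.append γ₂).pts (γ₁.len + 1 + i) = γ₂.pts (i + 1) :=
  (if_neg (by omega)).trans (congrArg γ₂.pts (by omega))

lemma weight_append (W : Pt → ℝ) (γ₁ : URPath x y) (γ₂ : URPath y z) :
    (γ₁.append γ₂).weight W = γ₁.weight W + γ₂.weight W - W y := by
  have h₂ : γ₂.weight W = W y + ∑ i ∈ Finset.range γ₂.len, W (γ₂.pts (i + 1)) := by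
    rw [weight, Finset.sum_range_succ', γ₂.first, add_comm]
  rw [h₂, weight, weight,
    show (γ₁.append γ₂).len + 1 = γ₁.len + 1 + γ₂.len from Nat.add_right_comm _ _ _,
    Finset.sum_range_add, Finset.sum_congr rfl fun i hi =>
      congrArg W (append_pts_of_le γ₁ γ₂ (Nat.lt_succ_iff.mp (Finset.mem_range.mp hi)))]
  simp only [append_pts_len_add]
  ring

def take (γ : URPath x y) (k : ℕ) (hk : k ≤ γ.len) : URPath x (γ.pts k) :=
  ⟨k, γ.pts, γ.first, rfl, fun i hi => γ.step i (by omega)⟩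

def drop (γ : URPath x y) (k : ℕ) (hk : k ≤ γ.len) : URPath (γ.pts k) y where
  len := γ.len - k
  pts i := γ.pts (k + i)
  first := rfl
  last := by rw [Nat.add_sub_cancel' hk, γ.last]
  step i hi := γ.step (k + i) (by omega)

lemma weight_take_add_weight_drop (W : Pt → ℝ) (γ : URPath x y) (k : ℕ) (hk : k ≤ γ.len) :
    (γ.take k hk).weight W + (γ.drop k hk).weight W = γ.weight W + W (γ.pts k) := by
  have hdrop : (γ.drop k hk).weight W
      = W (γ.pts k) + ∑ i ∈ Finset.range (γ.len - k), W (γ.pts (k + 1 + i)) := by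
    rw [weight, Finset.sum_range_succ', add_comm]
    simp only [drop, add_zero, ← add_assoc, add_right_comm k]
  rw [hdrop, weight, weight, show γ.len + 1 = k + 1 + (γ.len - k) by omega,
    Finset.sum_range_add (fun i => W (γ.pts i)) (k + 1) (γ.len - k)]
  simp only [take]
  ring

def translate (γ : URPath x y) (c : Pt) {x' y' : Pt} (hx : x' = x + c) (hy : y' = y + c) :
    URPath x' y' where
  len := γ.len
  pts i := γ.pts i + c
  first := by rw [γ.first, hx]
  last := by rw [γ.last, hy]
  step i hi := by
    rcases γ.step i hi with h | h
    · left; rw [h, add_right_comm]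
    · right; rw [h, add_right_comm]

lemma weight_translate (W : Pt → ℝ) (γ : URPath x y) (c : Pt) {x' y' : Pt}
    (hx : x' = x + c) (hy : y' = y + c) :
    (γ.translate c hx hy).weight W = γ.weight fun p => W (p + c) := rfl

end URPath

open URPath

section LastPassageTime

variable {x y z : Pt}

-- `URPath x y` is uncountable (`pts` is arbitrary beyond `len`), so `lpt` is recast as a
-- maximum over the finitely many vertex sets of paths, which makes it measurable in the weights.
def pathSupports (x y : Pt) : Set (Finset Pt) := {s | ∃ γ : URPath x y, γ.support = s}

lemma pathSupports_finite (x y : Pt) : (pathSupports x y).Finite :=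
  (Finset.Icc x y).powerset.finite_toSet.subset fun _ ⟨γ, hγ⟩ =>
    Finset.mem_coe.mpr (Finset.mem_powerset.mpr (hγ ▸ γ.support_subset_Icc))

lemma path_weights_eq_image (W : Pt → ℝ) (x y : Pt) :
    {t | ∃ γ : URPath x y, γ.weight W = t} = (fun s => ∑ p ∈ s, W p) '' pathSupports x y := by
  ext t
  simp only [pathSupports, Set.mem_ofPred_eq, Set.mem_image, weight_eq_sum_support]
  constructor
  · rintro ⟨γ, rfl⟩; exact ⟨_, ⟨γ, rfl⟩, rfl⟩
  · rintro ⟨_, ⟨γ, rfl⟩, rfl⟩; exact ⟨γ, rfl⟩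

lemma path_weights_finite (W : Pt → ℝ) (x y : Pt) :
    {t | ∃ γ : URPath x y, γ.weight W = t}.Finite := by
  rw [path_weights_eq_image]
  exact (pathSupports_finite x y).image _

lemma lpt_eq_iSup (W : Pt → ℝ) (x y : Pt) :
    lpt W x y = ⨆ s : pathSupports x y, ∑ p ∈ (s : Finset Pt), W p := by
  rw [lpt, path_weights_eq_image, sSup_image']

lemma measurable_lpt (x y : Pt) : Measurable fun W : Pt → ℝ => lpt W x y := by
  have := (pathSupports_finite x y).to_subtype
  simp only [lpt_eq_iSup]
  exact Measurable.iSup fun s => Finset.measurable_sum _ fun p _ => measurable_pi_apply p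

lemma weight_le_lpt (W : Pt → ℝ) (γ : URPath x y) : γ.weight W ≤ lpt W x y :=
  le_csSup (path_weights_finite W x y).bddAbove ⟨γ, rfl⟩

def URPath.IsGeodesic (W : Pt → ℝ) (γ : URPath x y) : Prop := γ.weight W = lpt W x y

lemma exists_isGeodesic (W : Pt → ℝ) (h : x ≤ y) : ∃ γ : URPath x y, γ.IsGeodesic W :=
  Set.Nonempty.csSup_mem (s := {t | ∃ γ : URPath x y, γ.weight W = t}) ⟨_, rightThenUp h, rfl⟩
    (path_weights_finite W x y)

lemma lpt_add_lpt_sub_le (W : Pt → ℝ) (hxy : x ≤ y) (hyz : y ≤ z) :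
    lpt W x y + lpt W y z - W y ≤ lpt W x z := by
  obtain ⟨γ₁, hγ₁⟩ := exists_isGeodesic W hxy
  obtain ⟨γ₂, hγ₂⟩ := exists_isGeodesic W hyz
  rw [← hγ₁, ← hγ₂, ← weight_append]
  exact weight_le_lpt W _

lemma URPath.IsGeodesic.lpt_eq {W : Pt → ℝ} {γ : URPath x y} (hγ : γ.IsGeodesic W) {k : ℕ}
    (hk : k ≤ γ.len) : lpt W x y = lpt W x (γ.pts k) + lpt W (γ.pts k) y - W (γ.pts k) := by
  refine le_antisymm ?_ ?_
  · rw [← hγ]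
    linarith [weight_take_add_weight_drop W γ k hk, weight_le_lpt W (γ.take k hk),
      weight_le_lpt W (γ.drop k hk)]
  · exact lpt_add_lpt_sub_le W (γ.le_pts hk) (γ.pts_le hk)

lemma lpt_comp_add (W : Pt → ℝ) (c x y : Pt) :
    lpt (fun p => W (p + c)) x y = lpt W (x + c) (y + c) := by
  unfold lpt
  congr 1
  ext t
  constructor
  · rintro ⟨γ, rfl⟩
    exact ⟨γ.translate c rfl rfl, rfl⟩
  · rintro ⟨γ, rfl⟩
    refine ⟨γ.translate (-c) (by abel) (by abel), ?_⟩
    simp [weight_translate]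

end LastPassageTime

lemma flat_two_mul (z : ℤ) : flat (2 * z) = (z, -z) := by
  simp [flat]

lemma flat_two_mul_add (z s : ℤ) : flat (2 * (z + s)) = flat (2 * z) + (s, -s) := by
  simp only [flat_two_mul, Prod.mk_add_mk]
  ext <;> ring

lemma isCornerIdx_flat_iff {w : ℤ} : IsCornerIdx flat w ↔ Even w := by
  simp only [IsCornerIdx, flat, e1, e2, Prod.ext_iff, even_iff_two_dvd]
  split_ifs <;> simp only [Prod.fst_add, Prod.snd_add, Prod.fst_sub, Prod.snd_sub] <;> omega

lemma isRoot_flat_iff {W : Pt → ℝ} {z : ℤ} {x : Pt} :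
    IsRoot W flat (2 * z) x ↔ ltc (flat (2 * z)) x ∧
      ∀ z', ltc (flat (2 * z')) x → lpt W (flat (2 * z') + dd) x ≤ lpt W (flat (2 * z) + dd) x := by
  simp only [IsRoot, isCornerIdx_flat_iff, even_two_mul, true_and]
  refine and_congr_right fun _ => ⟨fun h z' => h (2 * z') (even_two_mul z'), ?_⟩
  rintro h _ ⟨z', rfl⟩
  rw [← two_mul]
  exact h z'

lemma IsRoot.of_isGeodesic {W : Pt → ℝ} {φ : ℤ → Pt} {z : ℤ} {x : Pt} (hroot : IsRoot W φ z x)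
    {γ : URPath (φ z + dd) x} (hγ : γ.IsGeodesic W) {k : ℕ} (hk : k ≤ γ.len) :
    IsRoot W φ z (γ.pts k) := by
  obtain ⟨hcorner, -, hmax⟩ := hroot
  have hstart := γ.le_pts hk
  have hend := γ.pts_le hk
  refine ⟨hcorner, ltc_iff_add_dd_le.mpr hstart, fun z' hcorner' hz' => ?_⟩
  have hz'x : φ z' + dd ≤ x := (ltc_iff_add_dd_le.mp hz').trans hend
  have hsplit := hγ.lpt_eq hk
  have hsuper := lpt_add_lpt_sub_le W (ltc_iff_add_dd_le.mp hz') hend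
  linarith [hmax z' hcorner' (ltc_iff_add_dd_le.mpr hz'x)]

lemma heightGe_of_isRoot {W : Pt → ℝ} {z : ℤ} {x : Pt} {n : ℕ} (hn : 1 ≤ n)
    (hx : (n : ℤ) + 1 ≤ x.1 + x.2) (hroot : IsRoot W flat (2 * z) x) : HeightGe W z n := by
  obtain ⟨γ, hγ⟩ := exists_isGeodesic W (ltc_iff_add_dd_le.mp hroot.2.1)
  have hlen := γ.len_eq
  simp only [flat_two_mul, dd, Prod.fst_add, Prod.snd_add] at hlen
  have hk : n - 1 ≤ γ.len := by omega
  have hlevel := γ.level_pts hk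
  simp only [flat_two_mul, dd, Prod.fst_add, Prod.snd_add] at hlevel
  exact ⟨γ.pts (n - 1), by omega, hroot.of_isGeodesic hγ hk⟩

lemma ltc_add_right_iff {u v : Pt} (c : Pt) : ltc (u + c) (v + c) ↔ ltc u v := by
  simp only [ltc, Prod.fst_add, Prod.snd_add, add_lt_add_iff_right]

lemma isRoot_flat_comp_add_iff (W : Pt → ℝ) (z s : ℤ) (x : Pt) :
    IsRoot (fun p => W (p + (s, -s))) flat (2 * z) x ↔
      IsRoot W flat (2 * (z + s)) (x + (s, -s)) := by
  simp only [isRoot_flat_iff, lpt_comp_add, flat_two_mul_add, add_right_comm _ dd,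
    ltc_add_right_iff]
  refine and_congr_right fun _ => ((Equiv.addRight s).forall_congr fun {z'} => ?_)
  simp only [Equiv.coe_addRight, flat_two_mul_add, ltc_add_right_iff]

lemma heightGe_iff_comp_add (W : Pt → ℝ) (z : ℤ) (n : ℕ) :
    HeightGe W z n ↔ HeightGe (fun p => W (p + (z, -z))) 0 n := by
  simp only [HeightGe, isRoot_flat_comp_add_iff, zero_add]
  refine ((Equiv.subRight ((z, -z) : Pt)).exists_congr fun {x} => ?_)
  simp only [Equiv.subRight_apply, sub_add_cancel, Prod.fst_sub, Prod.snd_sub]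
  constructor <;> rintro ⟨hx, hroot⟩ <;> exact ⟨by omega, hroot⟩

lemma measurableSet_heightGe (z : ℤ) (n : ℕ) : MeasurableSet {W : Pt → ℝ | HeightGe W z n} := by
  simp only [HeightGe, isRoot_flat_iff, Set.ofPred_exists, Set.ofPred_and, Set.ofPred_forall]
  exact .iUnion fun x => .inter (.const _) <| .inter (.const _) <| .iInter fun z' =>
    .iInter fun _ => measurableSet_le (measurable_lpt _ _) (measurable_lpt _ _)

section Translation

variable {Ω : Type*} [MeasurableSpace Ω] {P : Measure Ω} {r : ℝ}

lemma IIDExp.aemeasurable {ι : Type*} {W : ι → Ω → ℝ} (hW : IIDExp P W r) (hr : 0 < r) (i : ι) :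
    AEMeasurable (W i) P := by
  by_contra h
  have := isProbabilityMeasure_expMeasure hr
  have hzero := hW.2 i
  rw [Measure.map_of_not_aemeasurable h] at hzero
  exact IsProbabilityMeasure.ne_zero _ hzero.symm

lemma IIDExp.map_comp_add_eq_map {W : Pt → Ω → ℝ} (hW : IIDExp P W r) (hr : 0 < r) (c : Pt) :
    P.map (fun ω p => W (p + c) ω) = P.map (fun ω p => W p ω) :=
  hW.1.map_precomp_eq_map (hW.aemeasurable hr) hW.2 (add_left_injective c)

lemma IIDExp.measure_heightGe_eq {W : Pt → Ω → ℝ} (hW : IIDExp P W r) (hr : 0 < r)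
    (z : ℤ) (n : ℕ) :
    P {ω | HeightGe (fun p => W p ω) z n} = P {ω | HeightGe (fun p => W p ω) 0 n} := by
  have hmeas (c : Pt) : AEMeasurable (fun ω p => W (p + c) ω) P :=
    aemeasurable_pi_iff.mpr fun p => hW.aemeasurable hr (p + c)
  have hz : {ω | HeightGe (fun p => W p ω) z n}
      = (fun ω p => W (p + (z, -z)) ω) ⁻¹' {f | HeightGe f 0 n} := by
    ext ω
    exact heightGe_iff_comp_add _ z n
  have h0 : {ω | HeightGe (fun p => W p ω) 0 n}
      = (fun ω p => W (p + 0) ω) ⁻¹' {f | HeightGe f 0 n} := by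
    simp only [add_zero]; rfl
  rw [hz, h0, ← Measure.map_apply_of_aemeasurable (hmeas _) (measurableSet_heightGe 0 n),
    ← Measure.map_apply_of_aemeasurable (hmeas _) (measurableSet_heightGe 0 n),
    hW.map_comp_add_eq_map hr, hW.map_comp_add_eq_map hr]

end Translation

end GF

open GF

theorem flat_substrate_root_location_union_bound_general
    {Ω : Type*} [MeasurableSpace Ω] (P : Measure Ω)
    (W : Pt → Ω → ℝ) (hW : IIDExp P W 1) :
    ∀ m n : ℕ, 1 ≤ m → 1 ≤ n →
      P {ω | ∃ z : ℤ, |z| < (m : ℤ) ∧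
          IsRoot (fun p => W p ω) flat (2 * z) ((n : ℤ), (n : ℤ))} ≤
        2 * (m : ENNReal) * P {ω | HeightGe (fun p => W p ω) 0 n} := by
  intro m n _ hn
  have hsub : {ω | ∃ z : ℤ, |z| < (m : ℤ) ∧
      IsRoot (fun p => W p ω) flat (2 * z) ((n : ℤ), (n : ℤ))} ⊆
        ⋃ z ∈ Finset.Ioo (-(m : ℤ)) m, {ω | HeightGe (fun p => W p ω) z n} := by
    rintro ω ⟨z, hz, hroot⟩
    exact Set.mem_biUnion (Finset.mem_Ioo.mpr (abs_lt.mp hz))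
      (heightGe_of_isRoot hn (by omega) hroot)
  have hcard : ((Finset.Ioo (-(m : ℤ)) m).card : ENNReal) ≤ 2 * m := by
    rw [Int.card_Ioo]
    exact_mod_cast (by omega : ((m : ℤ) - -(m : ℤ) - 1).toNat ≤ 2 * m)
  calc _ ≤ ∑ z ∈ Finset.Ioo (-(m : ℤ)) m, P {ω | HeightGe (fun p => W p ω) z n} :=
        (measure_mono hsub).trans (measure_biUnion_finset_le _ _)
    _ = (Finset.Ioo (-(m : ℤ)) m).card * P {ω | HeightGe (fun p => W p ω) 0 n} := by
        simp only [hW.measure_heightGe_eq one_pos, Finset.sum_const, nsmul_eq_mul]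
    _ ≤ 2 * m * P {ω | HeightGe (fun p => W p ω) 0 n} := by gcongr

/-- For exponential LPP with the flat substrate whose concave corners form the antidiagonal:
if `Z(n)` denotes the location of the root of the point `(n, n)` (i.e.
`Φ(n,n) = (Z(n), -Z(n))`), then `P(|Z(n)| < m) ≤ 2 m ⬝ P(H₀ ≥ n)` for all `m, n ≥ 1`. -/
theorem flat_substrate_root_location_union_bound
    {Ω : Type*} [MeasurableSpace Ω] (P : Measure Ω) [IsProbabilityMeasure P]
    (W : Pt → Ω → ℝ) (hW : IIDExp P W 1) :
    ∀ m n : ℕ, 1 ≤ m → 1 ≤ n →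
      P {ω | ∃ z : ℤ, |z| < (m : ℤ) ∧
          IsRoot (fun p => W p ω) flat (2 * z) ((n : ℤ), (n : ℤ))} ≤
        2 * (m : ENNReal) * P {ω | HeightGe (fun p => W p ω) 0 n} :=
  flat_substrate_root_location_union_bound_general P W hW
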